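/- arXiv:2102.02198 — 7 statements merged into one kernel-verified Lean document; each statement's English description precedes it below -/
import Mathlib

section
/- Let X and Y be compact Hausdorff topological spaces, φ a dynamical system on X and ψ a dynamical system on Y (time ℝ≥0), and let (τ, f) be a quasiconjugacy from φ to ψ. If U ⊆ Y is an attracting neighborhood for ψ, then f⁻¹(U) is an attracting neighborhood for φ. -/
open Set Topology NNReal

/-- A dynamical system on `X` with time `ℝ≥0`. -/
def IsDynSys {X : Type*} [TopologicalSpace X] (φ : ℝ≥0 × X → X) : Prop :=
  Continuous φ ∧ (∀ x, φ (0, x) = x) ∧ ∀ t s x, φ (t, φ (s, x)) = φ (t + s, x)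

/-- The ω-limit set of `U` under `φ`. -/
def omegaLim {X : Type*} [TopologicalSpace X] (φ : ℝ≥0 × X → X) (U : Set X) : Set X :=
  ⋂ t : ℝ≥0, closure (⋃ s : ℝ≥0, ⋃ _ : t ≤ s, (fun x => φ (s, x)) '' U)

/-- A quasiconjugacy from `φ` on `X` to `ψ` on `Y`. -/
def IsQuasiConj {X Y : Type*} [TopologicalSpace X] [TopologicalSpace Y]
    (φ : ℝ≥0 × X → X) (ψ : ℝ≥0 × Y → Y) (τ : ℝ≥0 × X → ℝ≥0) (f : X → Y) : Prop :=
  Continuous f ∧ Continuous τ ∧ (∀ x, τ (0, x) = 0) ∧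
    (∀ x, StrictMono fun t => τ (t, x)) ∧ (∀ x, Function.Surjective fun t => τ (t, x)) ∧
    ∀ t x, f (φ (t, x)) = ψ (τ (t, x), f x)

/-- If `U` is an attracting neighborhood for `ψ` (i.e. `ω_ψ(U) ⊆ int U`), then `f⁻¹(U)` is an
attracting neighborhood for `φ`, for any quasiconjugacy `(τ, f) : φ → ψ` between dynamical
systems on compact Hausdorff spaces. -/
theorem stmt1 {X Y : Type*} [TopologicalSpace X] [CompactSpace X] [T2Space X]
    [TopologicalSpace Y] [CompactSpace Y] [T2Space Y]
    (φ : ℝ≥0 × X → X) (ψ : ℝ≥0 × Y → Y) (hφ : IsDynSys φ) (hψ : IsDynSys ψ)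
    (τ : ℝ≥0 × X → ℝ≥0) (f : X → Y) (h : IsQuasiConj φ ψ τ f) (U : Set Y)
    (hU : omegaLim ψ U ⊆ interior U) :
    omegaLim φ (f ⁻¹' U) ⊆ interior (f ⁻¹' U) := by
  obtain ⟨hfc, hτc, hτ0, hτmono, hτsurj, hconj⟩ := h
  -- uniform escape time
  have key : ∀ T : ℝ≥0, ∃ S : ℝ≥0, ∀ s, S ≤ s → ∀ z : X, T ≤ τ (s, z) := by
    intro T
    have hcov : ∀ z : X, ∃ s : ℝ≥0, T < τ (s, z) := by
      intro z
      obtain ⟨s, hs⟩ := hτsurj z (T + 1)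
      exact ⟨s, by simp only at hs; rw [hs]; exact lt_add_of_pos_right T one_pos⟩
    choose s hs using hcov
    have hopen : ∀ z : X, IsOpen {z' : X | T < τ (s z, z')} := by
      intro z
      exact isOpen_Ioi.preimage (hτc.comp (Continuous.prodMk_right (s z)))
    obtain ⟨t, ht⟩ := isCompact_univ.elim_nhds_subcover (fun z => {z' : X | T < τ (s z, z')})
      (fun z _ => (hopen z).mem_nhds (hs z))
    refine ⟨t.sup s, fun s' hs' z => ?_⟩
    have hz : z ∈ ⋃ zi ∈ t, {z' : X | T < τ (s zi, z')} := ht.2 (mem_univ z)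
    simp only [mem_iUnion, mem_setOf_eq] at hz
    obtain ⟨zi, hzi, hTzi⟩ := hz
    exact le_of_lt (lt_of_lt_of_le hTzi
      ((hτmono z).monotone ((Finset.le_sup hzi).trans hs')))
  -- f maps ω_φ(f⁻¹U) into ω_ψ(U)
  have hsub : omegaLim φ (f ⁻¹' U) ⊆ f ⁻¹' (omegaLim ψ U) := by
    intro x hx
    simp only [omegaLim, mem_iInter, mem_preimage] at hx ⊢
    intro T
    obtain ⟨S, hS⟩ := key T
    have h1 : f x ∈ closure (f '' (⋃ s : ℝ≥0, ⋃ _ : S ≤ s,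
        (fun x => φ (s, x)) '' (f ⁻¹' U))) :=
      image_closure_subset_closure_image hfc ⟨x, hx S, rfl⟩
    refine closure_mono ?_ h1
    rintro y ⟨w, hw, rfl⟩
    simp only [mem_iUnion, mem_image] at hw ⊢
    obtain ⟨s, hSs, z, hz, rfl⟩ := hw
    exact ⟨τ (s, z), hS s hSs z, f z, hz, (hconj s z).symm⟩
  intro x hx
  have : f x ∈ interior U := hU (hsub hx)
  exact preimage_interior_subset_interior_preimage hfc this
end

section
/- Let φ be a dynamical system on X and ψ a dynamical system on Y (time ℝ≥0), and let (τ, f) be a quasiconjugacy from φ to ψ. If U ⊆ Y is an attracting block for ψ, i.e. ψ_s(closure U) ⊆ interior(U) for all s > 0, then f⁻¹(U) is an attracting block for φ, i.e. φ_t(closure(f⁻¹(U))) ⊆ interior(f⁻¹(U)) for all t > 0. -/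
open Set Topology NNReal

/-- If `U` is an attracting block for `ψ` (i.e. `ψ_s(cl U) ⊆ int U` for all `s > 0`), then
`f⁻¹(U)` is an attracting block for `φ`, for any quasiconjugacy `(τ, f) : φ → ψ`. -/
theorem stmt2 {X Y : Type*} [TopologicalSpace X] [TopologicalSpace Y]
    (φ : ℝ≥0 × X → X) (ψ : ℝ≥0 × Y → Y) (hφ : IsDynSys φ) (hψ : IsDynSys ψ)
    (τ : ℝ≥0 × X → ℝ≥0) (f : X → Y) (h : IsQuasiConj φ ψ τ f) (U : Set Y)
    (hU : ∀ s : ℝ≥0, 0 < s → (fun y => ψ (s, y)) '' closure U ⊆ interior U) :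
    ∀ t : ℝ≥0, 0 < t → (fun x => φ (t, x)) '' closure (f ⁻¹' U) ⊆ interior (f ⁻¹' U) := by
  obtain ⟨hf, hτc, hτ0, hτmono, hτsurj, hconj⟩ := h
  rintro t ht y ⟨x, hx, rfl⟩
  have hτpos : 0 < τ (t, x) := by
    have := hτmono x ht
    simpa [hτ0 x] using this
  have hfx : f x ∈ closure U :=
    closure_minimal (preimage_mono subset_closure) (isClosed_closure.preimage hf) hx
  have h1 : f (φ (t, x)) ∈ interior U := by
    rw [hconj]
    exact hU _ hτpos ⟨f x, hfx, rfl⟩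
  exact interior_maximal (preimage_mono interior_subset) (isOpen_interior.preimage hf) h1
end

section
/- Let X and Y be compact Hausdorff topological spaces, φ a dynamical system on X and ψ a dynamical system on Y (time ℝ≥0), and let (τ, f) be a conjugacy from φ to ψ, i.e. a quasiconjugacy in which f : X → Y is a homeomorphism. Then for every subset A ⊆ Y: A is an attractor of ψ if and only if f⁻¹(A) is an attractor of φ; moreover, if A is an attractor of ψ, then f⁻¹(A) is closed, invariant (φ_t(f⁻¹(A)) = f⁻¹(A) for all t ≥ 0), and ω_φ(f⁻¹(A)) = f⁻¹(A). -/
open Set Topology NNReal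
open Filter

/-- `A` is an attractor for `φ`: `A = ω_φ(U)` for some attracting neighborhood `U`. -/
def IsAttractor {X : Type*} [TopologicalSpace X] (φ : ℝ≥0 × X → X) (A : Set X) : Prop :=
  ∃ U : Set X, omegaLim φ U ⊆ interior U ∧ A = omegaLim φ U

def tailSet {X : Type*} [TopologicalSpace X] (φ : ℝ≥0 × X → X) (U : Set X) (t : ℝ≥0) : Set X :=
  ⋃ s : ℝ≥0, ⋃ _ : t ≤ s, (fun x => φ (s, x)) '' U

lemma omegaLim_eq {X : Type*} [TopologicalSpace X] (φ : ℝ≥0 × X → X) (U : Set X) :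
    omegaLim φ U = ⋂ t : ℝ≥0, closure (tailSet φ U t) := rfl

lemma mem_tailSet {X : Type*} [TopologicalSpace X] {φ : ℝ≥0 × X → X} {U : Set X} {t : ℝ≥0}
    {y : X} : y ∈ tailSet φ U t ↔ ∃ s, t ≤ s ∧ ∃ x ∈ U, φ (s, x) = y := by
  simp [tailSet]

lemma isClosed_omegaLim {X : Type*} [TopologicalSpace X] (φ : ℝ≥0 × X → X) (U : Set X) :
    IsClosed (omegaLim φ U) :=
  isClosed_iInter fun _ => isClosed_closure

-- Lemma A: uniform lower bound
lemma lemA {X : Type*} [TopologicalSpace X] [CompactSpace X]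
    (τ : ℝ≥0 × X → ℝ≥0) (hτc : Continuous τ)
    (hmono : ∀ x, StrictMono fun t => τ (t, x))
    (hsurj : ∀ x, Function.Surjective fun t => τ (t, x)) (T' : ℝ≥0) :
    ∃ T, ∀ x, T' ≤ τ (T, x) := by
  choose t ht using fun x => hsurj x (T' + 1)
  have hopen : ∀ x : X, IsOpen {x' | T' < τ (t x, x')} :=
    fun x => isOpen_lt continuous_const (hτc.comp (Continuous.prodMk_right (t x)))
  have hcover : univ ⊆ ⋃ x : X, {x' | T' < τ (t x, x')} := by
    intro x _
    exact mem_iUnion.2 ⟨x, by simpa [ht x] using lt_add_of_pos_right T' one_pos⟩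
  obtain ⟨s, hs⟩ := isCompact_univ.elim_finite_subcover _ hopen hcover
  refine ⟨s.sup t, fun x => ?_⟩
  obtain ⟨i, hi, hx⟩ := mem_iUnion₂.1 (hs (mem_univ x))
  exact le_of_lt (lt_of_lt_of_le hx ((hmono x).monotone (Finset.le_sup hi)))

-- Lemma B: uniform upper bound
lemma lemB {X : Type*} [TopologicalSpace X] [CompactSpace X]
    (τ : ℝ≥0 × X → ℝ≥0) (hτc : Continuous τ) (T : ℝ≥0) :
    ∃ T', ∀ x, τ (T, x) ≤ T' := by
  have : IsCompact (range fun x : X => τ (T, x)) :=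
    isCompact_range (hτc.comp (Continuous.prodMk_right T))
  obtain ⟨T', hT'⟩ := this.bddAbove
  exact ⟨T', fun x => hT' (mem_range_self x)⟩

section Conj

variable {X Y : Type*} [TopologicalSpace X] [CompactSpace X] [T2Space X]
    [TopologicalSpace Y] [CompactSpace Y] [T2Space Y]
    {φ : ℝ≥0 × X → X} {ψ : ℝ≥0 × Y → Y}
    {τ : ℝ≥0 × X → ℝ≥0} {f : X → Y}

-- Lemma D: image of omega limit under conjugacy
lemma lemD (h : IsQuasiConj φ ψ τ f) (hf : IsHomeomorph f) (U : Set X) :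
    f '' omegaLim φ U = omegaLim ψ (f '' U) := by
  obtain ⟨hfc, hτc, hτ0, hmono, hsurj, hcomm⟩ := h
  set e := hf.homeomorph f with he
  have hef : ∀ x, e x = f x := fun x => rfl
  apply Set.Subset.antisymm
  · rintro _ ⟨z, hz, rfl⟩
    rw [omegaLim_eq]
    refine mem_iInter.2 fun T' => ?_
    obtain ⟨T, hT⟩ := lemA τ hτc hmono hsurj T'
    have hz' : z ∈ closure (tailSet φ U T) := mem_iInter.1 hz T
    have himg : f '' tailSet φ U T ⊆ tailSet ψ (f '' U) T' := by
      rintro _ ⟨w, hw, rfl⟩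
      obtain ⟨s, hs, x, hx, rfl⟩ := mem_tailSet.1 hw
      refine mem_tailSet.2 ⟨τ (s, x), le_trans (hT x) ((hmono x).monotone hs), f x,
        mem_image_of_mem f hx, (hcomm s x).symm⟩
    have h1 : f z ∈ f '' closure (tailSet φ U T) := mem_image_of_mem f hz'
    have hcoe : ⇑e = f := rfl
    rw [← hcoe, e.image_closure, hcoe] at h1
    exact closure_mono himg h1
  · intro y hy
    refine ⟨e.symm y, ?_, e.apply_symm_apply y⟩
    rw [omegaLim_eq]
    refine mem_iInter.2 fun T => ?_
    obtain ⟨T', hT'⟩ := lemB τ hτc T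
    have hy' : y ∈ closure (tailSet ψ (f '' U) T') := mem_iInter.1 hy T'
    have himg : tailSet ψ (f '' U) T' ⊆ f '' tailSet φ U T := by
      intro w hw
      obtain ⟨s', hs', _, ⟨x, hx, rfl⟩, rfl⟩ := mem_tailSet.1 hw
      obtain ⟨s, hs⟩ := hsurj x s'
      have hs2 : τ (s, x) = s' := hs
      have hsT : T ≤ s := by
        by_contra hlt
        have hlt2 : τ (s, x) < τ (T, x) := (hmono x) (lt_of_not_ge hlt)
        rw [hs2] at hlt2
        exact lt_irrefl s' (lt_of_lt_of_le hlt2 (le_trans (hT' x) hs'))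
      refine ⟨φ (s, x), mem_tailSet.2 ⟨s, hsT, x, hx, rfl⟩, ?_⟩
      rw [hcomm s x, hs2]
    have hcoe : ⇑e = f := rfl
    have : y ∈ f '' closure (tailSet φ U T) := by
      rw [← hcoe, e.image_closure, hcoe]
      exact closure_mono himg hy'
    obtain ⟨w, hw, rfl⟩ := this
    rwa [show e.symm (f w) = w from e.symm_apply_apply w]

end Conj

-- Lemma E: forward invariance
lemma lemE {X : Type*} [TopologicalSpace X]
    {φ : ℝ≥0 × X → X} (hφ : IsDynSys φ) (U : Set X) (t : ℝ≥0) :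
    (fun x => φ (t, x)) '' omegaLim φ U ⊆ omegaLim φ U := by
  rintro _ ⟨z, hz, rfl⟩
  rw [omegaLim_eq]
  refine mem_iInter.2 fun r => ?_
  have hz' : z ∈ closure (tailSet φ U r) := mem_iInter.1 hz r
  have hc : Continuous fun x => φ (t, x) := hφ.1.comp (Continuous.prodMk_right t)
  have himg : (fun x => φ (t, x)) '' tailSet φ U r ⊆ tailSet φ U r := by
    rintro _ ⟨w, hw, rfl⟩
    obtain ⟨s, hs, x, hx, rfl⟩ := mem_tailSet.1 hw
    exact mem_tailSet.2 ⟨t + s, le_trans hs le_add_self, x, hx, (hφ.2.2 t s x).symm⟩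
  have h1 : φ (t, z) ∈ (fun x => φ (t, x)) '' closure (tailSet φ U r) :=
    mem_image_of_mem _ hz'
  exact closure_mono himg (image_closure_subset_closure_image hc h1)

-- Lemma F: backward invariance (compactness)
lemma lemF {X : Type*} [TopologicalSpace X] [CompactSpace X] [T2Space X]
    {φ : ℝ≥0 × X → X} (hφ : IsDynSys φ) (U : Set X) (t : ℝ≥0) :
    omegaLim φ U ⊆ (fun x => φ (t, x)) '' omegaLim φ U := by
  intro y hy
  set F₀ : Filter (ℝ≥0 × X) := (Filter.atTop ×ˢ 𝓟 U) ⊓ Filter.comap φ (𝓝 y) with hF₀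
  have h1 := (Filter.atTop_basis (α := ℝ≥0)).prod (Filter.hasBasis_principal U)
  have h2 := (Filter.basis_sets (𝓝 y)).comap φ
  have hbasis := h1.inf h2
  have hne : F₀.NeBot := by
    rw [hbasis.neBot_iff]
    rintro ⟨⟨a, _⟩, N⟩ ⟨-, hN⟩
    have hya : y ∈ closure (tailSet φ U a) := mem_iInter.1 hy a
    obtain ⟨w, hwN, hwt⟩ := mem_closure_iff_nhds.1 hya N hN
    obtain ⟨s, hsa, x, hxU, hsx⟩ := mem_tailSet.1 hwt
    exact ⟨(s, x), ⟨⟨hsa, hxU⟩, by simpa [hsx] using hwN⟩⟩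
  set g : ℝ≥0 × X → X := fun p => φ (p.1 - t, p.2) with hg
  set F₁ : Filter X := F₀.map g with hF₁
  have hne1 : F₁.NeBot := hne.map g
  obtain ⟨z, -, hz⟩ := isCompact_univ.exists_clusterPt (le_principal_iff.2 univ_mem : F₁ ≤ 𝓟 univ)
  have hzω : z ∈ omegaLim φ U := by
    rw [omegaLim_eq]
    refine mem_iInter.2 fun r => ?_
    have hmem : tailSet φ U r ∈ F₁ := by
      rw [hF₁, Filter.mem_map]
      refine Filter.mem_of_superset (Filter.mem_inf_of_left
        (Filter.prod_mem_prod (Filter.Ici_mem_atTop (r + t)) (Filter.mem_principal_self U))) ?_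
      rintro ⟨s, x⟩ ⟨hs, hx⟩
      exact mem_tailSet.2 ⟨s - t, le_tsub_of_add_le_right hs, x, hx, rfl⟩
    exact mem_closure_iff_clusterPt.2 (hz.mono (le_principal_iff.2 hmem))
  refine ⟨z, hzω, ?_⟩
  have hct : Continuous fun x => φ (t, x) := hφ.1.comp (Continuous.prodMk_right t)
  have hcl : ClusterPt (φ (t, z)) (F₁.map fun x => φ (t, x)) :=
    hz.map hct.continuousAt Filter.tendsto_map
  have hmapeq : (F₁.map fun x => φ (t, x)) = F₀.map φ := by
    rw [hF₁, Filter.map_map]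
    apply Filter.map_congr
    have hmem : {p : ℝ≥0 × X | t ≤ p.1} ∈ F₀ := by
      refine Filter.mem_inf_of_left (Filter.mem_of_superset
        (Filter.prod_mem_prod (Filter.Ici_mem_atTop t) (univ_mem : univ ∈ 𝓟 U)) ?_)
      rintro ⟨s, x⟩ ⟨hs, -⟩
      exact hs
    filter_upwards [hmem] with p hp
    show φ (t, φ (p.1 - t, p.2)) = φ p
    rw [hφ.2.2, add_tsub_cancel_of_le hp]
  have hle : F₀.map φ ≤ 𝓝 y :=
    le_trans (Filter.map_mono inf_le_right) (Filter.map_comap_le)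
  rw [hmapeq] at hcl
  have : (𝓝 (φ (t, z)) ⊓ 𝓝 y).NeBot := hcl.neBot.mono (inf_le_inf_left _ hle)
  exact (eq_of_nhds_neBot this)

-- Lemma G: omega limit of an omega limit
lemma lemG {X : Type*} [TopologicalSpace X] [CompactSpace X] [T2Space X]
    {φ : ℝ≥0 × X → X} (hφ : IsDynSys φ) (U : Set X) :
    omegaLim φ (omegaLim φ U) = omegaLim φ U := by
  have hinv : ∀ t, (fun x => φ (t, x)) '' omegaLim φ U = omegaLim φ U :=
    fun t => Subset.antisymm (lemE hφ U t) (lemF hφ U t)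
  have htail : ∀ r : ℝ≥0, tailSet φ (omegaLim φ U) r = omegaLim φ U := by
    intro r
    apply Subset.antisymm
    · intro y hy
      obtain ⟨s, _, x, hx, rfl⟩ := mem_tailSet.1 hy
      exact (hinv s) ▸ mem_image_of_mem _ hx
    · intro y hy
      obtain ⟨x, hx, hxy⟩ := (hinv r).symm ▸ hy
      exact mem_tailSet.2 ⟨r, le_refl r, x, hx, hxy⟩
  rw [omegaLim_eq]
  simp only [htail]
  rw [(isClosed_omegaLim φ U).closure_eq, iInter_const]

/-- For a conjugacy `(τ, f) : φ → ψ` (a quasiconjugacy with `f` a homeomorphism) between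
dynamical systems on compact Hausdorff spaces, `A` is an attractor of `ψ` iff `f⁻¹(A)` is an
attractor of `φ`; and for an attractor `A` of `ψ`, the set `f⁻¹(A)` is closed, invariant and
satisfies `ω_φ(f⁻¹(A)) = f⁻¹(A)`. -/
theorem stmt4 {X Y : Type*} [TopologicalSpace X] [CompactSpace X] [T2Space X]
    [TopologicalSpace Y] [CompactSpace Y] [T2Space Y]
    (φ : ℝ≥0 × X → X) (ψ : ℝ≥0 × Y → Y) (hφ : IsDynSys φ) (hψ : IsDynSys ψ)
    (τ : ℝ≥0 × X → ℝ≥0) (f : X → Y) (h : IsQuasiConj φ ψ τ f) (hf : IsHomeomorph f) :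
    ∀ A : Set Y,
      (IsAttractor ψ A ↔ IsAttractor φ (f ⁻¹' A)) ∧
      (IsAttractor ψ A →
        IsClosed (f ⁻¹' A) ∧ (∀ t : ℝ≥0, (fun x => φ (t, x)) '' (f ⁻¹' A) = f ⁻¹' A) ∧
          omegaLim φ (f ⁻¹' A) = f ⁻¹' A) := by
  intro A
  set e := hf.homeomorph f with he
  have hcoe : ⇑e = f := rfl
  have key : ∀ U : Set X, f '' omegaLim φ U = omegaLim ψ (f '' U) := lemD h hf
  have key2 : ∀ V : Set Y, omegaLim φ (f ⁻¹' V) = f ⁻¹' omegaLim ψ V := by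
    intro V
    have himg : f '' (f ⁻¹' V) = V := image_preimage_eq V hf.surjective
    have h1 : f '' omegaLim φ (f ⁻¹' V) = omegaLim ψ V := by rw [key, himg]
    rw [← h1, preimage_image_eq _ hf.injective]
  have fwd : IsAttractor ψ A → IsAttractor φ (f ⁻¹' A) := by
    rintro ⟨V, hV1, rfl⟩
    refine ⟨f ⁻¹' V, ?_, ?_⟩
    · rw [key2]
      refine subset_trans (preimage_mono hV1) ?_
      rw [← hcoe, e.preimage_interior]
    · rw [key2]
  have bwd : IsAttractor φ (f ⁻¹' A) → IsAttractor ψ A := by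
    rintro ⟨U, hU1, hU2⟩
    refine ⟨f '' U, ?_, ?_⟩
    · rw [← key]
      refine subset_trans (image_mono hU1) ?_
      rw [← hcoe, e.image_interior]
    · rw [← key, ← hU2, image_preimage_eq A hf.surjective]
  refine ⟨⟨fwd, bwd⟩, fun hA => ?_⟩
  obtain ⟨U, hU1, hU2⟩ := fwd hA
  rw [hU2]
  exact ⟨isClosed_omegaLim φ U,
    fun t => Subset.antisymm (lemE hφ U t) (lemF hφ U t), lemG hφ U⟩
end

section
/- Let φ be a dynamical system on a topological space X (time ℝ≥0) and U ⊆ X. Then the following are equivalent: (1) there exists τ > 0 such that φ_t(closure U) ⊆ interior(U) for all t ≥ τ; (2) there exists τ > 0 such that φ({(t,x) : t ∈ [τ, 2τ], x ∈ closure U}) ⊆ interior(U), i.e. ⋃_{t ∈ [τ,2τ]} φ_t(closure U) ⊆ interior(U). -/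
/-!
The times `t` with `φ_t(cl U) ⊆ int U` are closed under addition, since
`φ_{t+s}(cl U) = φ_t(φ_s(cl U)) ⊆ φ_t(int U) ⊆ φ_t(cl U) ⊆ int U`; so with `s` they contain every
`n * s` with `n ≥ 1`. Every `t ≥ τ` is such a multiple of some `s ∈ [τ, 2τ]`: take `n = ⌊t / τ⌋`.
-/

open Set Topology NNReal

section Arithmetic

variable {K : Type*} [Semifield K] [LinearOrder K] [IsStrictOrderedRing K] [FloorSemiring K]

theorem exists_nat_mul_eq_of_le {τ t : K} (hτ : 0 < τ) (ht : τ ≤ t) :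
    ∃ n : ℕ, 0 < n ∧ ∃ s ∈ Icc τ (2 * τ), t = n * s := by
  set n := ⌊t / τ⌋₊
  have hn : 0 < n := Nat.floor_pos.mpr ((one_le_div hτ).mpr ht)
  have hn' : (0 : K) < n := Nat.cast_pos.mpr hn
  have hlow : n * τ ≤ t := (le_div_iff₀ hτ).mp (Nat.floor_le (div_nonneg (hτ.le.trans ht) hτ.le))
  have hup : t < (n + 1) * τ := (div_lt_iff₀ hτ).mp (Nat.lt_floor_add_one _)
  refine ⟨n, hn, t / n, ⟨?_, ?_⟩, (mul_div_cancel₀ _ hn'.ne').symm⟩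
  · rwa [le_div_iff₀ hn', mul_comm]
  · rw [div_le_iff₀ hn']
    calc t ≤ (n + 1) * τ := hup.le
      _ ≤ (n + n) * τ := by gcongr; exact Nat.one_le_cast.mpr hn
      _ = 2 * τ * n := by ring

end Arithmetic

section Trapping

variable {X : Type*} [TopologicalSpace X] {φ : ℝ≥0 × X → X} {U : Set X}

theorem mapsTo_closure_interior_add (hflow : ∀ t s x, φ (t, φ (s, x)) = φ (t + s, x))
    {t s : ℝ≥0} (ht : MapsTo (fun x => φ (t, x)) (closure U) (interior U))
    (hs : MapsTo (fun x => φ (s, x)) (closure U) (interior U)) :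
    MapsTo (fun x => φ (t + s, x)) (closure U) (interior U) := fun x hx => by
  simpa only [hflow] using ht (interior_subset_closure (hs hx))

theorem mapsTo_closure_interior_nat_mul (hflow : ∀ t s x, φ (t, φ (s, x)) = φ (t + s, x))
    {s : ℝ≥0} (hs : MapsTo (fun x => φ (s, x)) (closure U) (interior U)) {n : ℕ} (hn : 0 < n) :
    MapsTo (fun x => φ (n * s, x)) (closure U) (interior U) := by
  induction n, hn using Nat.le_induction with
  | base => simpa using hs
  | succ n _ ih =>
    rw [Nat.cast_succ, add_one_mul]
    exact mapsTo_closure_interior_add hflow ih hs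

end Trapping

/-- For a dynamical system `φ` on `X` and `U ⊆ X`, the following are equivalent:
(1) there is `τ > 0` with `φ_t(cl U) ⊆ int U` for all `t ≥ τ`;
(2) there is `τ > 0` with `⋃_{t ∈ [τ, 2τ]} φ_t(cl U) ⊆ int U`. -/
theorem stmt5 {X : Type*} [TopologicalSpace X] (φ : ℝ≥0 × X → X) (hφ : IsDynSys φ)
    (U : Set X) :
    (∃ τ : ℝ≥0, 0 < τ ∧ ∀ t : ℝ≥0, τ ≤ t → (fun x => φ (t, x)) '' closure U ⊆ interior U) ↔
      ∃ τ : ℝ≥0, 0 < τ ∧ ∀ t ∈ Set.Icc τ (2 * τ),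
        (fun x => φ (t, x)) '' closure U ⊆ interior U := by
  simp only [← mapsTo_iff_image_subset]
  constructor
  · rintro ⟨τ, hτ, h⟩
    exact ⟨τ, hτ, fun t ht => h t ht.1⟩
  · rintro ⟨τ, hτ, h⟩
    refine ⟨τ, hτ, fun t ht => ?_⟩
    obtain ⟨n, hn, s, hs, rfl⟩ := exists_nat_mul_eq_of_le hτ ht
    exact mapsTo_closure_interior_nat_mul hφ.2.2 (h s hs) hn
end

section
/- Let X be a compact metric space and let DS(ℝ≥0, X) denote the set of dynamical systems on X with time ℝ≥0, topologized as a subspace of the space C(ℝ≥0 × X, X) of continuous maps with the compact-open topology. Then for every subset U ⊆ X, the set Φ[ANbhd; U] = {φ ∈ DS(ℝ≥0, X) : U is an attracting neighborhood for φ} is open in DS(ℝ≥0, X). In particular, Φ[ANbhd; U] equals the union over τ > 0 of the basic compact-open sets {φ : φ([τ,2τ] × closure U) ⊆ interior(U)}. -/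
/-!
If `ω(U) ⊆ int U`, compactness of `X` puts the closure of some tail `⋃_{s ≥ t₀} φ_s(U)` inside
the open set `int U`, so `φ_t(cl U) ⊆ int U` for every `t ≥ t₀`, in particular on `[τ, 2τ]` for
`τ = t₀ + 1`. Conversely, the times `t` with `φ_t(cl U) ⊆ int U` are closed under addition, and
sums of elements of `[τ, 2τ]` fill `[τ, ∞)`. Hence for `s ≥ 2τ` the set `φ_s(U) = φ_τ(φ_{s-τ}(U))`
lies in the compact set `φ_τ(cl U) ⊆ int U`, which therefore contains `ω(U)`. Openness follows
because `{φ : φ([τ, 2τ] × cl U) ⊆ int U}` is a subbasic open set of the compact-open topology.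
-/

open Set Topology NNReal

/-- The space of dynamical systems on `X` with time `ℝ≥0`, topologized as a subspace of
`C(ℝ≥0 × X, X)` with the compact-open topology. -/
abbrev DS (X : Type*) [TopologicalSpace X] : Type _ :=
  {φ : C(ℝ≥0 × X, X) // (∀ x, φ (0, x) = x) ∧ ∀ t s x, φ (t, φ (s, x)) = φ (t + s, x)}

theorem NNReal.Ici_subset_of_Icc_subset_of_add_mem {A : Set ℝ≥0}
    (hA : ∀ s ∈ A, ∀ t ∈ A, s + t ∈ A) {τ : ℝ≥0} (hτ : 0 < τ) (h : Icc τ (2 * τ) ⊆ A) :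
    Ici τ ⊆ A := by
  intro t (ht : τ ≤ t)
  obtain ⟨n, htn⟩ := Archimedean.arch t hτ
  induction n generalizing t with
  | zero => exact absurd (htn.trans_lt hτ) (not_lt.2 ht)
  | succ n ih =>
    by_cases ht₂ : t ≤ 2 * τ
    · exact h ⟨ht, ht₂⟩
    have hτt : τ ≤ t - τ := le_tsub_of_add_le_left (by rw [← two_mul]; exact (not_le.1 ht₂).le)
    have htn' : t - τ ≤ n • τ := tsub_le_iff_right.2 (by rwa [← succ_nsmul])
    rw [← tsub_add_cancel_of_le ht]
    exact hA _ (ih hτt htn') _ (h ⟨le_rfl, le_mul_of_one_le_left zero_le one_le_two⟩)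

section Semiflow

variable {X : Type*} [TopologicalSpace X] {φ : ℝ≥0 × X → X}

theorem eventually_mapsTo_closure_of_omegaLim_subset [CompactSpace X] (hφ : Continuous φ)
    {U V : Set X} (hV : IsOpen V) (hUV : omegaLim φ U ⊆ V) :
    ∀ᶠ t in Filter.atTop, MapsTo (fun x => φ (t, x)) (closure U) V := by
  have hanti : Antitone fun t : ℝ≥0 => closure (⋃ s, ⋃ _ : t ≤ s, (fun x => φ (s, x)) '' U) :=
    fun a b hab => closure_mono (iUnion₂_mono' fun s hs => ⟨s, hab.trans hs, subset_rfl⟩)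
  obtain ⟨t₀, ht₀⟩ := exists_subset_nhds_of_isCompact' hanti.directed_ge
    (fun _ => isClosed_closure.isCompact) (fun _ => isClosed_closure)
    (fun x hx => hV.mem_nhds (hUV hx))
  refine Filter.eventually_atTop.2 ⟨t₀, fun t ht x hx => ht₀ ?_⟩
  exact map_mem_closure (f := fun x => φ (t, x)) (hφ.comp (Continuous.prodMk_right t)) hx
    fun y hy => mem_iUnion₂.2 ⟨t, ht, y, hy, rfl⟩

theorem omegaLim_subset_interior_of_mapsTo [T2Space X] [CompactSpace X] (hφ : Continuous φ)
    (hφ_add : ∀ t s x, φ (t, φ (s, x)) = φ (t + s, x)) {U : Set X} {τ : ℝ≥0} (hτ : 0 < τ)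
    (h : ∀ t ∈ Icc τ (2 * τ), MapsTo (fun x => φ (t, x)) (closure U) (interior U)) :
    omegaLim φ U ⊆ interior U := by
  have hge : ∀ t, τ ≤ t → MapsTo (fun x => φ (t, x)) (closure U) (interior U) := by
    refine NNReal.Ici_subset_of_Icc_subset_of_add_mem (A := {t | MapsTo _ _ _}) ?_ hτ h
    intro s hs t ht x hx
    show φ (s + t, x) ∈ _
    rw [← hφ_add]
    exact hs (interior_subset_closure (ht hx))
  have hK : IsCompact ((fun x => φ (τ, x)) '' closure U) :=
    isClosed_closure.isCompact.image (hφ.comp (Continuous.prodMk_right τ))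
  have htail : (⋃ s, ⋃ _ : 2 * τ ≤ s, (fun x => φ (s, x)) '' U) ⊆
      (fun x => φ (τ, x)) '' closure U := by
    refine iUnion₂_subset fun s hs => ?_
    rintro _ ⟨x, hx, rfl⟩
    have hτs : τ ≤ s - τ := le_tsub_of_add_le_left (by rwa [← two_mul])
    refine ⟨φ (s - τ, x), interior_subset_closure (hge _ hτs (subset_closure hx)), ?_⟩
    show φ (τ, φ (s - τ, x)) = φ (s, x)
    rw [hφ_add, add_tsub_cancel_of_le (hτs.trans tsub_le_self)]
  calc omegaLim φ U ⊆ closure (⋃ s, ⋃ _ : 2 * τ ≤ s, (fun x => φ (s, x)) '' U) :=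
        iInter_subset _ (2 * τ)
    _ ⊆ (fun x => φ (τ, x)) '' closure U := closure_minimal htail hK.isClosed
    _ ⊆ interior U := image_subset_iff.2 (h τ ⟨le_rfl, le_mul_of_one_le_left zero_le one_le_two⟩)

end Semiflow

/-- For a compact metric space `X` and any `U ⊆ X`, the set
`Φ[ANbhd;U] = {φ ∈ DS(ℝ≥0,X) : U is an attracting neighborhood for φ}` is open, and equals
the union over `τ > 0` of the basic compact-open sets `{φ : φ([τ,2τ] × cl U) ⊆ int U}`. -/
theorem stmt6 {X : Type*} [MetricSpace X] [CompactSpace X] (U : Set X) :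
    IsOpen {φ : DS X | omegaLim (fun p => φ.1 p) U ⊆ interior U} ∧
      {φ : DS X | omegaLim (fun p => φ.1 p) U ⊆ interior U} =
        ⋃ τ : ℝ≥0, ⋃ _ : 0 < τ,
          {φ : DS X | (fun p => φ.1 p) '' (Set.Icc τ (2 * τ) ×ˢ closure U) ⊆ interior U} := by
  have heq : {φ : DS X | omegaLim (fun p => φ.1 p) U ⊆ interior U} =
      ⋃ τ : ℝ≥0, ⋃ _ : 0 < τ,
        {φ : DS X | (fun p => φ.1 p) '' (Set.Icc τ (2 * τ) ×ˢ closure U) ⊆ interior U} := by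
    ext φ
    simp only [mem_ofPred_eq, mem_iUnion, image_subset_iff, prod_subset_iff, exists_prop]
    refine ⟨fun h => ?_, fun ⟨τ, hτ, h⟩ =>
      omegaLim_subset_interior_of_mapsTo φ.1.continuous φ.2.2 hτ h⟩
    obtain ⟨t₀, ht₀⟩ := Filter.eventually_atTop.1 <|
      eventually_mapsTo_closure_of_omegaLim_subset φ.1.continuous isOpen_interior h
    exact ⟨t₀ + 1, add_pos_of_nonneg_of_pos zero_le one_pos,
      fun t ht => ht₀ t ((le_add_right le_rfl).trans ht.1)⟩
  refine ⟨heq ▸ isOpen_iUnion fun τ => isOpen_iUnion fun _ => ?_, heq⟩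
  simp only [← mapsTo_iff_image_subset]
  exact (ContinuousMap.isOpen_setOfPred_mapsTo (isCompact_Icc.prod isClosed_closure.isCompact)
    isOpen_interior).preimage continuous_subtype_val
end

section
/- Let D be a topological space and let (E, w) with E : D → Set P, w : D → P → S and (E′, w′) with E′ : D → Set P′, w′ : D → P′ → S′ be two stable continuation data, with induced fibers G(φ) = w(φ) '' E(φ) and G′(φ) = w′(φ) '' E′(φ). Define the product data (E × E′)(φ) = E(φ) ×ˢ E′(φ) ⊆ P × P′ and (w × w′)(φ)(U,U′) = (w(φ)(U), w′(φ)(U′)). Then: (1) E × E′ is stable, i.e. {φ : (U,U′) ∈ (E×E′)(φ)} = Φ[E;U] ∩ Φ[E′;U′] is open for all (U,U′); (2) the map g : Π[G×G′] → Π[G] • Π[G′] given by (φ,(s,s′)) ↦ ((φ,s),(φ,s′)) is a homeomorphism, where Π[G×G′] carries the étalé topology induced by (E×E′, w×w′) and Π[G] • Π[G′] = {(p,q) ∈ Π[G] × Π[G′] : π(p) = π(q)} carries the subspace topology of the product of the étalé topologies. -/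
open Set Topology TopologicalSpace

/-- `Φ[E;U] = {φ ∈ D : U ∈ E(φ)}`. -/
def PhiSet {D P : Type*} (E : D → Set P) (U : P) : Set D := {φ : D | U ∈ E φ}

/-- `E` is stable: every `Φ[E;U]` is open. -/
def IsStable {D P : Type*} [TopologicalSpace D] (E : D → Set P) : Prop :=
  ∀ U : P, IsOpen (PhiSet E U)

/-- The underlying set of the étalé space `Π[G]`, where `G(φ) = w(φ) '' E(φ)`. -/
def PiG {D P S : Type*} (E : D → Set P) (w : D → P → S) : Type _ :=
  {p : D × S // p.2 ∈ w p.1 '' E p.1}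

/-- The étalé topology on `Π[G]`. -/
def etaleTopG {D P S : Type*} [TopologicalSpace D] (E : D → Set P) (w : D → P → S) :
    TopologicalSpace (PiG E w) :=
  TopologicalSpace.generateFrom
    {V : Set (PiG E w) | ∃ (U : P) (Ω : Set D), IsOpen Ω ∧ Ω ⊆ PhiSet E U ∧
      V = {p : PiG E w | p.1.1 ∈ Ω ∧ p.1.2 = w p.1.1 U}}

/-- The comparison map `g : Π[G×G′] → Π[G] • Π[G′]`,
`(φ,(s,s′)) ↦ ((φ,s),(φ,s′))`. -/
def gMap {D P P' S S' : Type*} (E : D → Set P) (E' : D → Set P')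
    (w : D → P → S) (w' : D → P' → S') :
    PiG (fun φ => E φ ×ˢ E' φ) (fun φ q => (w φ q.1, w' φ q.2)) →
      {q : PiG E w × PiG E' w' // q.1.1.1 = q.2.1.1} :=
  fun p =>
    ⟨(⟨(p.1.1, p.1.2.1), by
        obtain ⟨q, hq, h⟩ := p.2
        exact ⟨q.1, hq.1, congrArg Prod.fst h⟩⟩,
      ⟨(p.1.1, p.1.2.2), by
        obtain ⟨q, hq, h⟩ := p.2
        exact ⟨q.2, hq.2, congrArg Prod.snd h⟩⟩), rfl⟩

/-!
Over a point `φ`, the fibre of `Π[G×G′]` is the product of the fibres of `Π[G]` and `Π[G′]`,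
so `g` is a bijection onto the fibre product, with inverse `((φ,s),(φ,s′)) ↦ (φ,(s,s′))`.
The inverse is continuous because it pulls `Θ[w×w′;(U,U′)](Ω)` back to the trace of
`Θ[w;U](Ω) × Θ[w′;U′](Ω)` on the fibre product. For `g` itself, the first component pulls
`Θ[w;U](Ω)` back to `⋃ U′, Θ[w×w′;(U,U′)](Ω ∩ Φ[E′;U′])`, where `U′` ranges over the possible
second coordinates of a point; these sets are basic open precisely because `E′` is stable.
Symmetrically for the second component, using the stability of `E`.
-/

section

variable {D P P' S S' : Type*}

theorem phiSet_prod (E : D → Set P) (E' : D → Set P') (U : P) (U' : P') :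
    PhiSet (fun φ => E φ ×ˢ E' φ) (U, U') = PhiSet E U ∩ PhiSet E' U' :=
  rfl

theorem IsStable.prod [TopologicalSpace D] {E : D → Set P} {E' : D → Set P'} (hE : IsStable E)
    (hE' : IsStable E') : IsStable (fun φ => E φ ×ˢ E' φ) :=
  fun ⟨U, U'⟩ => (hE U).inter (hE' U')

namespace PiG

/-- `Θ[w;U](Ω)`. -/
def theta (E : D → Set P) (w : D → P → S) (U : P) (Ω : Set D) : Set (PiG E w) :=
  {p | p.1.1 ∈ Ω ∧ p.1.2 = w p.1.1 U}

@[simp]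
theorem mem_theta {E : D → Set P} {w : D → P → S} {U : P} {Ω : Set D} {p : PiG E w} :
    p ∈ theta E w U Ω ↔ p.1.1 ∈ Ω ∧ p.1.2 = w p.1.1 U :=
  Iff.rfl

section Product

variable (E : D → Set P) (E' : D → Set P') (w : D → P → S) (w' : D → P' → S')

def prodFst (p : PiG (fun φ => E φ ×ˢ E' φ) (fun φ q => (w φ q.1, w' φ q.2))) : PiG E w :=
  ⟨(p.1.1, p.1.2.1), by
    obtain ⟨q, hq, h⟩ := p.2
    exact ⟨q.1, hq.1, congrArg Prod.fst h⟩⟩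

def prodSnd (p : PiG (fun φ => E φ ×ˢ E' φ) (fun φ q => (w φ q.1, w' φ q.2))) : PiG E' w' :=
  ⟨(p.1.1, p.1.2.2), by
    obtain ⟨q, hq, h⟩ := p.2
    exact ⟨q.2, hq.2, congrArg Prod.snd h⟩⟩

def prodMk (q : {q : PiG E w × PiG E' w' // q.1.1.1 = q.2.1.1}) :
    PiG (fun φ => E φ ×ˢ E' φ) (fun φ q => (w φ q.1, w' φ q.2)) :=
  ⟨(q.1.1.1.1, (q.1.1.1.2, q.1.2.1.2)), by
    obtain ⟨⟨⟨⟨φ, s⟩, a, ha, hs⟩, ⟨⟨φ', s'⟩, b, hb, hs'⟩⟩, rfl : φ = φ'⟩ := q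
    exact ⟨(a, b), ⟨ha, hb⟩, Prod.ext hs hs'⟩⟩

theorem gMap_eq :
    gMap E E' w w' = fun p => ⟨(prodFst E E' w w' p, prodSnd E E' w w' p), rfl⟩ :=
  rfl

theorem prodFst_preimage_theta (U : P) (Ω : Set D) :
    prodFst E E' w w' ⁻¹' theta E w U Ω =
      ⋃ U' : P', theta (fun φ => E φ ×ˢ E' φ) (fun φ q => (w φ q.1, w' φ q.2)) (U, U')
        (Ω ∩ PhiSet E' U') := by
  ext p
  simp only [mem_preimage, mem_iUnion, mem_theta, mem_inter_iff, prodFst]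
  constructor
  · rintro ⟨hφ, hs⟩
    obtain ⟨⟨a, b⟩, ⟨-, hb⟩, hab⟩ := p.2
    exact ⟨b, ⟨hφ, hb⟩, Prod.ext hs (congrArg Prod.snd hab).symm⟩
  · rintro ⟨U', ⟨hφ, -⟩, hs⟩
    exact ⟨hφ, congrArg Prod.fst hs⟩

theorem prodSnd_preimage_theta (U' : P') (Ω : Set D) :
    prodSnd E E' w w' ⁻¹' theta E' w' U' Ω =
      ⋃ U : P, theta (fun φ => E φ ×ˢ E' φ) (fun φ q => (w φ q.1, w' φ q.2)) (U, U')
        (Ω ∩ PhiSet E U) := by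
  ext p
  simp only [mem_preimage, mem_iUnion, mem_theta, mem_inter_iff, prodSnd]
  constructor
  · rintro ⟨hφ, hs'⟩
    obtain ⟨⟨a, b⟩, ⟨ha, -⟩, hab⟩ := p.2
    exact ⟨a, ⟨hφ, ha⟩, Prod.ext (congrArg Prod.fst hab).symm hs'⟩
  · rintro ⟨U, ⟨hφ, -⟩, hs⟩
    exact ⟨hφ, congrArg Prod.snd hs⟩

theorem prodMk_preimage_theta (U : P) (U' : P') (Ω : Set D) :
    prodMk E E' w w' ⁻¹'
        theta (fun φ => E φ ×ˢ E' φ) (fun φ q => (w φ q.1, w' φ q.2)) (U, U') Ω =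
      Subtype.val ⁻¹' (theta E w U Ω ×ˢ theta E' w' U' Ω) := by
  ext ⟨⟨p, p'⟩, hpp' : p.1.1 = p'.1.1⟩
  simp only [mem_preimage, mem_prod, mem_theta]
  simp only [prodMk, ← hpp', Prod.mk.injEq]
  tauto

end Product

section Topology

variable [TopologicalSpace D]

attribute [local instance] etaleTopG

theorem isOpen_theta {E : D → Set P} {w : D → P → S} {U : P} {Ω : Set D} (hΩ : IsOpen Ω)
    (hΩU : Ω ⊆ PhiSet E U) : IsOpen (theta E w U Ω) :=
  isOpen_generateFrom_of_mem ⟨U, Ω, hΩ, hΩU, rfl⟩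

theorem continuous_of_isOpen_preimage_theta {X : Type*} [TopologicalSpace X]
    {E : D → Set P} {w : D → P → S} {f : X → PiG E w}
    (hf : ∀ U Ω, IsOpen Ω → Ω ⊆ PhiSet E U → IsOpen (f ⁻¹' theta E w U Ω)) : Continuous f :=
  continuous_generateFrom_iff.mpr fun _ ⟨U, Ω, hΩ, hΩU, hV⟩ => hV ▸ hf U Ω hΩ hΩU

variable {E : D → Set P} {E' : D → Set P'} (w : D → P → S) (w' : D → P' → S')

theorem continuous_prodFst (hE' : IsStable E') : Continuous (prodFst E E' w w') :=
  continuous_of_isOpen_preimage_theta fun U Ω hΩ hΩU => by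
    rw [prodFst_preimage_theta]
    exact isOpen_iUnion fun U' =>
      isOpen_theta (hΩ.inter (hE' U')) fun _ hφ => ⟨hΩU hφ.1, hφ.2⟩

theorem continuous_prodSnd (hE : IsStable E) : Continuous (prodSnd E E' w w') :=
  continuous_of_isOpen_preimage_theta fun U' Ω hΩ hΩU' => by
    rw [prodSnd_preimage_theta]
    exact isOpen_iUnion fun U =>
      isOpen_theta (hΩ.inter (hE U)) fun _ hφ => ⟨hφ.2, hΩU' hφ.1⟩

theorem continuous_prodMk : Continuous (prodMk E E' w w') :=
  continuous_of_isOpen_preimage_theta fun ⟨U, U'⟩ Ω hΩ hΩU => by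
    rw [prodMk_preimage_theta]
    exact ((isOpen_theta hΩ fun _ hφ => (hΩU hφ).1).prod
      (isOpen_theta hΩ fun _ hφ => (hΩU hφ).2)).preimage continuous_subtype_val

theorem isHomeomorph_gMap (hE : IsStable E) (hE' : IsStable E') :
    IsHomeomorph (gMap E E' w w') := by
  refine isHomeomorph_iff_exists_inverse.mpr
    ⟨?_, prodMk E E' w w', fun _ => rfl, ?_, continuous_prodMk w w'⟩
  · rw [gMap_eq]
    exact ((continuous_prodFst w w' hE').prodMk (continuous_prodSnd w w' hE)).subtype_mk _
  · rintro ⟨⟨⟨⟨φ, _⟩, _⟩, ⟨⟨φ', _⟩, _⟩⟩, rfl : φ = φ'⟩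
    rfl

end Topology

end PiG

end

/-- For stable continuation data `(E,w)` and `(E′,w′)`: (1) the product data
`(E×E′, w×w′)` is stable, with `Φ[E×E′;(U,U′)] = Φ[E;U] ∩ Φ[E′;U′]`; (2) the map
`g : Π[G×G′] → Π[G] • Π[G′]`, `(φ,(s,s′)) ↦ ((φ,s),(φ,s′))`, is a homeomorphism, where
`Π[G] • Π[G′]` is the fiber product `{(p,q) : π(p) = π(q)}` with the subspace topology of
the product of the étalé topologies. -/
theorem stmt14 {D P P' S S' : Type*} [TopologicalSpace D]
    (E : D → Set P) (E' : D → Set P') (w : D → P → S) (w' : D → P' → S')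
    (hE : IsStable E) (hE' : IsStable E') :
    (∀ (U : P) (U' : P'),
      PhiSet (fun φ => E φ ×ˢ E' φ) (U, U') = PhiSet E U ∩ PhiSet E' U' ∧
        IsOpen (PhiSet (fun φ => E φ ×ˢ E' φ) (U, U'))) ∧
      (letI : TopologicalSpace (PiG E w) := etaleTopG E w
       letI : TopologicalSpace (PiG E' w') := etaleTopG E' w'
       letI : TopologicalSpace (PiG (fun φ => E φ ×ˢ E' φ) (fun φ q => (w φ q.1, w' φ q.2))) :=
         etaleTopG (fun φ => E φ ×ˢ E' φ) (fun φ q => (w φ q.1, w' φ q.2))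
       IsHomeomorph (gMap E E' w w')) :=
  ⟨fun U U' => ⟨phiSet_prod E E' U U', hE.prod hE' (U, U')⟩, PiG.isHomeomorph_gMap w w' hE hE'⟩
end

section
/- Let B be a Boolean algebra and let L ⊆ B be a sublattice with ⊥ ∈ L and ⊤ ∈ L (L closed under ⊓ and ⊔). Then the Boolean subalgebra of B generated by L equals the closure of L under symmetric difference; that is, every element of the Boolean subalgebra generated by L can be written as a finite symmetric difference a₁ Δ a₂ Δ ⋯ Δ aₙ of elements a₁, …, aₙ ∈ L, where a Δ b = (a ⊓ bᶜ) ⊔ (b ⊓ aᶜ). (Equivalently, viewing B as a Boolean ring with addition Δ and multiplication ⊓, the subring generated by L equals the additive subgroup generated by L, so the canonical ℤ₂-linear map from formal ℤ₂-sums of elements of L onto the Boolean subalgebra generated by L is surjective.) -/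
open Set

open scoped symmDiff

def IsBoolSubalgebra {B : Type*} [BooleanAlgebra B] (T : Set B) : Prop :=
  ⊥ ∈ T ∧ ⊤ ∈ T ∧ (∀ a ∈ T, aᶜ ∈ T) ∧ (∀ a ∈ T, ∀ b ∈ T, a ⊓ b ∈ T) ∧
    ∀ a ∈ T, ∀ b ∈ T, a ⊔ b ∈ T

def boolGen {B : Type*} [BooleanAlgebra B] (L : Set B) : Set B :=
  ⋂₀ {T : Set B | IsBoolSubalgebra T ∧ L ⊆ T}

/-!
In the Boolean ring `(B, ∆, ⊓)` the additive span of a `⊓`-closed set `L` is closed under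
multiplication by distributivity, contains `⊤` and hence complements (`xᶜ = x ∆ ⊤`), and
contains joins because `x ⊔ y = x ∆ y ∆ (x ⊓ y)`. So it is already a Boolean subalgebra,
and it is contained in every Boolean subalgebra containing `L`.
-/

namespace List

variable {α : Type*} [GeneralizedBooleanAlgebra α]

theorem foldr_symmDiff (l : List α) (y : α) :
    l.foldr (· ∆ ·) y = l.foldr (· ∆ ·) ⊥ ∆ y := by
  induction l with
  | nil => simp
  | cons a t ih => simp only [foldr_cons, ih, symmDiff_assoc]

theorem foldr_symmDiff_append (l m : List α) :
    (l ++ m).foldr (· ∆ ·) ⊥ = l.foldr (· ∆ ·) ⊥ ∆ m.foldr (· ∆ ·) ⊥ := by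
  rw [foldr_append, foldr_symmDiff]

theorem inf_foldr_symmDiff (a : α) (l : List α) :
    a ⊓ l.foldr (· ∆ ·) ⊥ = (l.map (a ⊓ ·)).foldr (· ∆ ·) ⊥ := by
  induction l with
  | nil => simp
  | cons b t ih => simp only [foldr_cons, map_cons, inf_symmDiff_distrib_left, ih]

end List

def symmDiffSpan {α : Type*} [GeneralizedBooleanAlgebra α] (L : Set α) : Set α :=
  {x | ∃ l : List α, (∀ a ∈ l, a ∈ L) ∧ x = l.foldr (· ∆ ·) ⊥}

section symmDiffSpan

variable {α : Type*} [GeneralizedBooleanAlgebra α] {L : Set α}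

theorem bot_mem_symmDiffSpan : ⊥ ∈ symmDiffSpan L := ⟨[], by simp, rfl⟩

theorem subset_symmDiffSpan : L ⊆ symmDiffSpan L := fun a ha => ⟨[a], by simpa, by simp⟩

theorem symmDiff_mem_symmDiffSpan {x y : α} (hx : x ∈ symmDiffSpan L)
    (hy : y ∈ symmDiffSpan L) : x ∆ y ∈ symmDiffSpan L := by
  obtain ⟨l, hl, rfl⟩ := hx
  obtain ⟨m, hm, rfl⟩ := hy
  refine ⟨l ++ m, fun a ha => ?_, (List.foldr_symmDiff_append l m).symm⟩
  rcases List.mem_append.1 ha with h | h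
  exacts [hl a h, hm a h]

variable (hinf : ∀ a ∈ L, ∀ b ∈ L, a ⊓ b ∈ L)
include hinf

theorem inf_mem_symmDiffSpan_of_mem {a x : α} (ha : a ∈ L) (hx : x ∈ symmDiffSpan L) :
    a ⊓ x ∈ symmDiffSpan L := by
  obtain ⟨l, hl, rfl⟩ := hx
  refine ⟨l.map (a ⊓ ·), fun b hb => ?_, List.inf_foldr_symmDiff a l⟩
  obtain ⟨c, hc, rfl⟩ := List.mem_map.1 hb
  exact hinf a ha c (hl c hc)

theorem inf_mem_symmDiffSpan {x y : α} (hx : x ∈ symmDiffSpan L) (hy : y ∈ symmDiffSpan L) :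
    x ⊓ y ∈ symmDiffSpan L := by
  obtain ⟨l, hl, rfl⟩ := hx
  induction l with
  | nil => simpa using bot_mem_symmDiffSpan
  | cons a t ih =>
    rw [List.foldr_cons, inf_symmDiff_distrib_right]
    exact symmDiff_mem_symmDiffSpan
      (inf_mem_symmDiffSpan_of_mem hinf (hl a List.mem_cons_self) hy)
      (ih fun c hc => hl c (List.mem_cons_of_mem _ hc))

theorem sup_mem_symmDiffSpan {x y : α} (hx : x ∈ symmDiffSpan L) (hy : y ∈ symmDiffSpan L) :
    x ⊔ y ∈ symmDiffSpan L := by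
  have h := symmDiff_mem_symmDiffSpan (symmDiff_mem_symmDiffSpan hx hy)
    (inf_mem_symmDiffSpan hinf hx hy)
  rwa [(disjoint_symmDiff_inf x y).symmDiff_eq_sup, symmDiff_sup_inf] at h

end symmDiffSpan

theorem isBoolSubalgebra_symmDiffSpan {B : Type*} [BooleanAlgebra B] {L : Set B}
    (htop : ⊤ ∈ L) (hinf : ∀ a ∈ L, ∀ b ∈ L, a ⊓ b ∈ L) :
    IsBoolSubalgebra (symmDiffSpan L) := by
  have htop' : ⊤ ∈ symmDiffSpan L := subset_symmDiffSpan htop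
  refine ⟨bot_mem_symmDiffSpan, htop', fun x hx => ?_,
    fun x hx y hy => inf_mem_symmDiffSpan hinf hx hy,
    fun x hx y hy => sup_mem_symmDiffSpan hinf hx hy⟩
  simpa only [symmDiff_top, hnot_eq_compl] using symmDiff_mem_symmDiffSpan hx htop'

theorem IsBoolSubalgebra.symmDiff_mem {B : Type*} [BooleanAlgebra B] {T : Set B}
    (hT : IsBoolSubalgebra T) {x y : B} (hx : x ∈ T) (hy : y ∈ T) : x ∆ y ∈ T := by
  obtain ⟨-, -, hcompl, hinf, hsup⟩ := hT
  rw [symmDiff_eq]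
  exact hsup _ (hinf x hx _ (hcompl y hy)) _ (hinf y hy _ (hcompl x hx))

theorem symmDiffSpan_subset {B : Type*} [BooleanAlgebra B] {L T : Set B}
    (hT : IsBoolSubalgebra T) (hLT : L ⊆ T) : symmDiffSpan L ⊆ T := by
  rintro _ ⟨l, hl, rfl⟩
  induction l with
  | nil => exact hT.1
  | cons a t ih =>
    exact hT.symmDiff_mem (hLT (hl a List.mem_cons_self))
      (ih fun c hc => hl c (List.mem_cons_of_mem _ hc))

theorem stmt17_general {B : Type*} [BooleanAlgebra B] (L : Set B)
    (htop : ⊤ ∈ L)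
    (hinf : ∀ a ∈ L, ∀ b ∈ L, a ⊓ b ∈ L) :
    boolGen L = {x : B | ∃ l : List B, (∀ a ∈ l, a ∈ L) ∧ x = l.foldr (· ∆ ·) ⊥} :=
  Subset.antisymm
    (sInter_subset_of_mem ⟨isBoolSubalgebra_symmDiffSpan htop hinf, subset_symmDiffSpan⟩)
    (subset_sInter fun _ ⟨hT, hLT⟩ => symmDiffSpan_subset hT hLT)

/-- If `L` is a bounded sublattice of a Boolean algebra `B`, then the Boolean subalgebra
generated by `L` is exactly the set of finite symmetric differences
`a₁ ∆ a₂ ∆ ⋯ ∆ aₙ` of elements of `L` (where `a ∆ b = (a ⊓ bᶜ) ⊔ (b ⊓ aᶜ)`); equivalently,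
the canonical `ℤ₂`-linear map from formal sums of elements of `L` onto the generated
Boolean subalgebra is surjective. -/
theorem stmt17 {B : Type*} [BooleanAlgebra B] (L : Set B)
    (hbot : ⊥ ∈ L) (htop : ⊤ ∈ L)
    (hinf : ∀ a ∈ L, ∀ b ∈ L, a ⊓ b ∈ L) (hsup : ∀ a ∈ L, ∀ b ∈ L, a ⊔ b ∈ L) :
    boolGen L = {x : B | ∃ l : List B, (∀ a ∈ l, a ∈ L) ∧ x = l.foldr (· ∆ ·) ⊥} :=
  stmt17_general L htop hinf
end
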